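/- Let d ≥ 2, ε > 0, and consider the points x = 0 ∈ ℝ^{d-1} and x' = (ε/√(d−1), …, ε/√(d−1)) ∈ ℝ^{d-1}. Then ‖x − x'‖₂ = ε and ‖σ(x) − σ(x')‖₂ = 2ε/√(1 + ε²). In particular, the Lipschitz constant 2 in the bound ‖σ(x) − σ(x')‖₂ ≤ 2‖x − x'‖₂ cannot be improved. -/

import Mathlib

open Finset

/-- The inverse stereographic projection `σ : ℝ^(d-1) → ℝ^d` with pole `(0,…,0,1)`:
`σ(x) = (2x₁/(1+S²), …, 2x_{d-1}/(1+S²), (−1+S²)/(1+S²))` where `S² = ∑ⱼ xⱼ²`. -/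
noncomputable def sigma' {d : ℕ} (x : Fin (d - 1) → ℝ) : Fin d → ℝ := fun k =>
  if h : (k : ℕ) < d - 1 then
    2 * x ⟨k, h⟩ / (1 + ∑ j, x j ^ 2)
  else
    (-1 + ∑ j, x j ^ 2) / (1 + ∑ j, x j ^ 2)

/-- The stereographic projection `τ : ℝ^d → ℝ^(d-1)` from the pole `(0,…,0,1)`:
`τ(x) = (x₁/(1−x_d), …, x_{d-1}/(1−x_d))`. -/
noncomputable def tau' {d : ℕ} (x : Fin d → ℝ) : Fin (d - 1) → ℝ := fun i =>
  x ⟨(i : ℕ), by have := i.isLt; omega⟩ / (1 - x ⟨d - 1, by have := i.isLt; omega⟩)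

/-- The projection pole `p = (0,…,0,1) ∈ ℝ^d`. -/
def pole (d : ℕ) : Fin d → ℝ := fun k => if (k : ℕ) = d - 1 then 1 else 0

/-- The Euclidean norm `‖x‖₂` of a vector `x ∈ ℝ^n`. -/
noncomputable def norm2 {n : ℕ} (x : Fin n → ℝ) : ℝ := Real.sqrt (∑ i, x i ^ 2)

/-! σ sends `0` to the south pole, and for every `x` with `S = ‖x‖²` one computes
`‖σ x - σ 0‖² = (4S + 4S²)/(1+S)² = 4S/(1+S)`. So along any ray from the origin
`‖σ x - σ 0‖ / ‖x‖ = 2/√(1 + ‖x‖²)`, which tends to `2` as `x → 0`: no Lipschitz constant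
below `2` is possible, even on the unit ball. -/

open Filter Topology

lemma norm2_neg {n : ℕ} (x : Fin n → ℝ) : norm2 (-x) = norm2 x := by
  simp only [norm2, Pi.neg_apply, neg_sq]

lemma norm2_const_div_sqrt {n : ℕ} (hn : n ≠ 0) {t : ℝ} (ht : 0 ≤ t) :
    norm2 (fun _ : Fin n => t / Real.sqrt n) = t := by
  have hn' : (0 : ℝ) < n := by positivity
  simp only [norm2, sum_const, card_univ, Fintype.card_fin, nsmul_eq_mul, div_pow,
    Real.sq_sqrt hn'.le]
  rw [mul_div_cancel₀ _ hn'.ne', Real.sqrt_sq ht]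

lemma sigma'_castSucc {n : ℕ} (x : Fin n → ℝ) (i : Fin n) :
    (sigma' x : Fin (n + 1) → ℝ) i.castSucc = 2 * x i / (1 + ∑ j, x j ^ 2) := by
  simp [sigma']

lemma sigma'_last {n : ℕ} (x : Fin n → ℝ) :
    (sigma' x : Fin (n + 1) → ℝ) (Fin.last n) = (-1 + ∑ j, x j ^ 2) / (1 + ∑ j, x j ^ 2) := by
  simp [sigma']

lemma sum_sq_sigma_zero_sub {n : ℕ} (x : Fin n → ℝ) :
    ∑ k, (sigma' (0 : Fin n → ℝ) - sigma' x : Fin (n + 1) → ℝ) k ^ 2 =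
      4 * (∑ j, x j ^ 2) / (1 + ∑ j, x j ^ 2) := by
  set S := ∑ j, x j ^ 2 with hS
  have hS0 : 0 ≤ S := by positivity
  have hsum0 : ∑ j, (0 : Fin n → ℝ) j ^ 2 = 0 := by simp
  have hcoord (i : Fin n) : (sigma' (0 : Fin n → ℝ) - sigma' x : Fin (n + 1) → ℝ) i.castSucc ^ 2 =
      4 * x i ^ 2 / (1 + S) ^ 2 := by
    rw [Pi.sub_apply, sigma'_castSucc, sigma'_castSucc, hsum0, Pi.zero_apply]
    field_simp
    ring
  have hlast : (sigma' (0 : Fin n → ℝ) - sigma' x : Fin (n + 1) → ℝ) (Fin.last n) ^ 2 =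
      4 * S ^ 2 / (1 + S) ^ 2 := by
    rw [Pi.sub_apply, sigma'_last, sigma'_last, hsum0]
    field_simp
    ring
  rw [Fin.sum_univ_castSucc, Finset.sum_congr rfl fun i _ => hcoord i, hlast, ← Finset.sum_div,
    ← Finset.mul_sum, ← hS]
  field_simp

lemma norm2_sigma_zero_sub {d : ℕ} (x : Fin (d - 1) → ℝ) :
    norm2 (sigma' 0 - sigma' x : Fin d → ℝ) = 2 * norm2 x / Real.sqrt (1 + norm2 x ^ 2) := by
  obtain _ | n := d
  · simp [norm2]
  have hS : 0 ≤ ∑ j, x j ^ 2 := by positivity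
  rw [norm2, sum_sq_sigma_zero_sub, norm2, Real.sq_sqrt hS, Real.sqrt_div' _ (by positivity),
    Real.sqrt_mul (by norm_num : (0 : ℝ) ≤ 4), show Real.sqrt 4 = 2 by norm_num]
  -- the sums in `norm2 x` range over `Fin (n + 1 - 1)`, those of the lemma over `Fin n`
  rfl

lemma two_le_of_forall_two_div_sqrt_le {c : ℝ}
    (h : ∀ t : ℝ, 0 < t → t ≤ 1 → 2 / Real.sqrt (1 + t ^ 2) ≤ c) : 2 ≤ c := by
  have hlim : Tendsto (fun t : ℝ => 2 / Real.sqrt (1 + t ^ 2)) (𝓝[>] 0) (𝓝 2) := by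
    have hc : Continuous (fun t : ℝ => 2 / Real.sqrt (1 + t ^ 2)) :=
      continuous_const.div (by fun_prop) fun t => (Real.sqrt_pos.2 (by positivity)).ne'
    simpa using (hc.tendsto 0).mono_left nhdsWithin_le_nhds
  refine le_of_tendsto hlim ?_
  filter_upwards [Ioc_mem_nhdsGT one_pos] with t ht using h t ht.1 ht.2

/-- For `x = 0` and `x' = (ε/√(d−1), …, ε/√(d−1))` we have `‖x − x'‖₂ = ε` and
`‖σ(x) − σ(x')‖₂ = 2ε/√(1 + ε²)`; in particular the Lipschitz constant `2` of `σ`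
on the unit ball cannot be improved. -/
theorem sigma_lipschitz_tight {d : ℕ} (hd : 2 ≤ d) (ε : ℝ) (hε : 0 < ε) :
    norm2 ((0 : Fin (d - 1) → ℝ) - fun _ => ε / Real.sqrt ((d : ℝ) - 1)) = ε ∧
    norm2 (sigma' (0 : Fin (d - 1) → ℝ) -
        sigma' (fun _ => ε / Real.sqrt ((d : ℝ) - 1))) =
      2 * ε / Real.sqrt (1 + ε ^ 2) ∧
    (∀ c : ℝ, (∀ x x' : Fin (d - 1) → ℝ, norm2 x ≤ 1 → norm2 x' ≤ 1 →
        norm2 (sigma' x - sigma' x') ≤ c * norm2 (x - x')) → 2 ≤ c) := by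
  set v : ℝ → Fin (d - 1) → ℝ := fun t _ => t / Real.sqrt ((d : ℝ) - 1) with hv_def
  have hv (t : ℝ) (ht : 0 ≤ t) : norm2 (v t) = t := by
    rw [hv_def, ← Nat.cast_pred (by omega : 0 < d)]
    exact norm2_const_div_sqrt (by omega) ht
  have hσv (t : ℝ) (ht : 0 ≤ t) :
      norm2 (sigma' 0 - sigma' (v t) : Fin d → ℝ) = 2 * t / Real.sqrt (1 + t ^ 2) := by
    rw [norm2_sigma_zero_sub, hv t ht]
  refine ⟨by rw [zero_sub, norm2_neg, hv ε hε.le], hσv ε hε.le, fun c hc => ?_⟩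
  refine two_le_of_forall_two_div_sqrt_le fun t ht ht1 => ?_
  have h := hc 0 (v t) (by simp [norm2]) (by rw [hv t ht.le]; exact ht1)
  rw [hσv t ht.le, zero_sub, norm2_neg, hv t ht.le, mul_div_right_comm] at h
  exact le_of_mul_le_mul_right h ht
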